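/- Every real square matrix X can be factored as X = YZ where Y and Z are real symmetric matrices and Y is invertible. -/

import Mathlib

open Matrix

open Polynomial Module

theorem block_form (A : Type*) [CommRing A] [Algebra ℝ A] [Nontrivial A]
    (pb : PowerBasis ℝ A) :
    ∃ B : LinearMap.BilinForm ℝ A,
      (∀ u v, B u v = B v u) ∧
      (∀ (a u v : A), B (a * u) v = B u (a * v)) ∧
      (∀ u, (∀ v, B u v = 0) → u = 0) := by
  have hd : 0 < pb.dim := pb.dim_pos
  set d := pb.dim with hdd
  let lst : Fin d := ⟨d - 1, by omega⟩
  let lam : A →ₗ[ℝ] ℝ := pb.basis.coord lst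
  have hlam : ∀ m : ℕ, m < d → lam (pb.gen ^ m) = if m = d - 1 then 1 else 0 := by
    intro m hm
    have hb : pb.gen ^ m = pb.basis ⟨m, hm⟩ := by
      rw [pb.coe_basis]
    rw [hb]
    simp only [lam, Basis.coord_apply, Basis.repr_self, Finsupp.single_apply]
    have : (⟨m, hm⟩ : Fin d) = lst ↔ m = d - 1 := by
      constructor
      · intro h; exact congrArg Fin.val h
      · intro h; exact Fin.ext h
    by_cases h : m = d - 1
    · simp [this, h]; rfl
    · rw [if_neg (fun hh => h (this.mp hh)), if_neg h]
  refine ⟨(LinearMap.mul ℝ A).compr₂ lam, ?_, ?_, ?_⟩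
  · intro u v; simp [mul_comm]
  · intro a u v; simp [mul_assoc, mul_left_comm]
  · intro u hu
    by_contra hne
    have hrepr : pb.basis.repr u ≠ 0 := fun h => hne (pb.basis.repr.map_eq_zero_iff.mp h)
    have hsupp : (pb.basis.repr u).support.Nonempty := Finsupp.support_nonempty_iff.mpr hrepr
    let k : Fin d := (pb.basis.repr u).support.max' hsupp
    have hk : pb.basis.repr u k ≠ 0 := Finsupp.mem_support_iff.mp ((pb.basis.repr u).support.max'_mem hsupp)
    have hkle : ∀ i ∈ (pb.basis.repr u).support, i ≤ k := fun i hi => Finset.le_max' _ i hi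
    have hkd : (k : ℕ) ≤ d - 1 := by have := k.2; omega
    have key : (((LinearMap.mul ℝ A).compr₂ lam) u) (pb.gen ^ (d - 1 - (k : ℕ))) = pb.basis.repr u k := by
      have hu' : u = ∑ i : Fin d, pb.basis.repr u i • pb.basis i := (pb.basis.sum_repr u).symm
      calc lam (u * pb.gen ^ (d - 1 - (k : ℕ)))
          = lam ((∑ i : Fin d, pb.basis.repr u i • pb.basis i) * pb.gen ^ (d - 1 - (k : ℕ))) := by rw [← hu']
        _ = ∑ i : Fin d, pb.basis.repr u i * lam (pb.basis i * pb.gen ^ (d - 1 - (k : ℕ))) := by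
            rw [Finset.sum_mul]; rw [map_sum]; exact Finset.sum_congr rfl (fun i _ => by rw [smul_mul_assoc, _root_.map_smul]; rfl)
        _ = pb.basis.repr u k := by
            rw [Finset.sum_eq_single k]
            · rw [pb.coe_basis, ← pow_add]
              have : (k : ℕ) + (d - 1 - (k : ℕ)) = d - 1 := by omega
              rw [this, hlam (d-1) (by omega), if_pos rfl, mul_one]
            · intro i _ hik
              by_cases hi : pb.basis.repr u i = 0
              · rw [hi, zero_mul]
              · have hile : i ≤ k := hkle i (Finsupp.mem_support_iff.mpr hi)
                have hilt : (i : ℕ) < (k : ℕ) := Fin.lt_iff_val_lt_val.mp (lt_of_le_of_ne hile hik)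
                rw [pb.coe_basis, ← pow_add]
                rw [hlam ((i:ℕ) + (d - 1 - (k:ℕ))) (by omega), if_neg (by omega), mul_zero]
            · intro h; exact absurd (Finset.mem_univ k) h
    rw [hu _] at key
    exact hk key.symm

open DirectSum in
theorem exists_selfadjoint_form (V : Type) [AddCommGroup V] [Module ℝ V]
    [FiniteDimensional ℝ V] (f : Module.End ℝ V) :
    ∃ B : LinearMap.BilinForm ℝ V,
      (∀ u v, B u v = B v u) ∧ (∀ u v, B (f u) v = B u (f v)) ∧
      (∀ u, (∀ v, B u v = 0) → u = 0) := by
  classical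
  have htor : Module.IsTorsion ℝ[X] (Module.AEval' f) :=
    Module.AEval.isTorsion_of_finiteDimensional ℝ V f
  obtain ⟨ι, hι, p, hp, e, ⟨ψ⟩⟩ := Module.equiv_directSum_of_isTorsion htor
  set g : ι → ℝ[X] := fun i => p i ^ e i with hgdef
  have blocks : ∀ i : ι, ∃ B : LinearMap.BilinForm ℝ (ℝ[X] ⧸ (ℝ[X] ∙ g i)),
      (∀ u v, B u v = B v u) ∧
      (∀ (r : ℝ[X]) (u v : ℝ[X] ⧸ (ℝ[X] ∙ g i)), B (r • u) v = B u (r • v)) ∧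
      (∀ u, (∀ v, B u v = 0) → u = 0) := by
    intro i
    have hgi : g i ≠ 0 := pow_ne_zero _ (hp i).ne_zero
    rcases subsingleton_or_nontrivial (ℝ[X] ⧸ (ℝ[X] ∙ g i)) with hs | hn
    · exact ⟨0, by simp, by simp, fun u _ => Subsingleton.elim u 0⟩
    · haveI : Nontrivial (AdjoinRoot (g i)) := hn
      obtain ⟨B, h1, h2, h3⟩ := block_form _ (AdjoinRoot.powerBasis hgi)
      refine ⟨B, h1, fun r u v => ?_, h3⟩
      rw [Algebra.smul_def r u, Algebra.smul_def r v]
      exact h2 _ u v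
  choose Bb hsymm hbal hnd using blocks
  let BD : LinearMap.BilinForm ℝ (⨁ i : ι, ℝ[X] ⧸ (ℝ[X] ∙ g i)) := LinearMap.mk₂ ℝ
    (fun u v => ∑ i, Bb i (u i) (v i))
    (fun u u' v => by
      dsimp only
      simp only [DirectSum.add_apply, map_add, LinearMap.add_apply, Finset.sum_add_distrib])
    (fun r u v => by
      dsimp only
      rw [smul_eq_mul, Finset.mul_sum]
      refine Finset.sum_congr rfl fun i _ => ?_
      rw [DirectSum.smul_apply, _root_.map_smul, LinearMap.smul_apply, smul_eq_mul])
    (fun u v v' => by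
      dsimp only
      simp only [DirectSum.add_apply, map_add, Finset.sum_add_distrib])
    (fun r u v => by
      dsimp only
      rw [smul_eq_mul, Finset.mul_sum]
      refine Finset.sum_congr rfl fun i _ => ?_
      rw [DirectSum.smul_apply, _root_.map_smul, smul_eq_mul])
  have hBD_apply : ∀ u v : (⨁ i : ι, ℝ[X] ⧸ (ℝ[X] ∙ g i)), BD u v = ∑ i, Bb i (u i) (v i) := fun u v => rfl
  have hBD_symm : ∀ u v : (⨁ i : ι, ℝ[X] ⧸ (ℝ[X] ∙ g i)), BD u v = BD v u := by
    intro u v; rw [hBD_apply, hBD_apply]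
    exact Finset.sum_congr rfl fun i _ => hsymm i _ _
  have hBD_bal : ∀ (u v : (⨁ i : ι, ℝ[X] ⧸ (ℝ[X] ∙ g i))), BD ((X : ℝ[X]) • u) v = BD u ((X : ℝ[X]) • v) := by
    intro u v; rw [hBD_apply, hBD_apply]
    refine Finset.sum_congr rfl fun i _ => ?_
    rw [DirectSum.smul_apply, DirectSum.smul_apply]
    exact hbal i _ _ _
  have hBD_nd : ∀ u : (⨁ i : ι, ℝ[X] ⧸ (ℝ[X] ∙ g i)), (∀ v : (⨁ i : ι, ℝ[X] ⧸ (ℝ[X] ∙ g i)), BD u v = 0) → u = 0 := by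
    intro u hu
    refine DFinsupp.ext fun i => ?_
    refine hnd i (u i) fun w => ?_
    have := hu (DirectSum.of _ i w)
    rw [hBD_apply] at this
    rw [Finset.sum_eq_single i] at this
    · rwa [DirectSum.of_eq_same] at this
    · intro j _ hji
      rw [DirectSum.of_eq_of_ne _ _ _ hji, map_zero]
    · intro h; exact absurd (Finset.mem_univ i) h
  let φ : V ≃ₗ[ℝ] (⨁ i : ι, ℝ[X] ⧸ (ℝ[X] ∙ g i)) := (Module.AEval'.of f).trans (ψ.restrictScalars ℝ)
  refine ⟨BD.compl₁₂ φ.toLinearMap φ.toLinearMap, ?_, ?_, ?_⟩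
  · intro u v; simp only [LinearMap.compl₁₂_apply, LinearEquiv.coe_coe]; exact hBD_symm _ _
  · intro u v
    simp only [LinearMap.compl₁₂_apply, LinearEquiv.coe_coe]
    have hφ : φ (f u) = (X : ℝ[X]) • φ u := by
      show ψ (Module.AEval'.of f (f u)) = (X : ℝ[X]) • ψ (Module.AEval'.of f u)
      rw [← Module.AEval'.X_smul_of, _root_.map_smul]
    rw [hφ, hBD_bal]
    have hφ' : φ (f v) = (X : ℝ[X]) • φ v := by
      show ψ (Module.AEval'.of f (f v)) = (X : ℝ[X]) • ψ (Module.AEval'.of f v)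
      rw [← Module.AEval'.X_smul_of, _root_.map_smul]
    rw [hφ']
  · intro u hu
    have : φ u = 0 := by
      refine hBD_nd (φ u) fun w => ?_
      have := hu (φ.symm w)
      simpa only [LinearMap.compl₁₂_apply, LinearEquiv.coe_coe, LinearEquiv.apply_symm_apply]
        using this
    have := φ.map_eq_zero_iff.mp this
    exact this


/-- Every real square matrix is a product of two real symmetric
matrices, the first of which is invertible. -/
theorem stmt7 (n : ℕ) (X : Matrix (Fin n) (Fin n) ℝ) :
    ∃ Y Z : Matrix (Fin n) (Fin n) ℝ,
      Y.IsSymm ∧ Z.IsSymm ∧ IsUnit Y ∧ X = Y * Z := by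
  obtain ⟨B, hsymm, hadj, hnd⟩ := exists_selfadjoint_form (Fin n → ℝ) X.mulVecLin
  set W := Matrix.of (fun i j => B (Pi.single i 1) (Pi.single j 1)) with hW
  -- expansion of the second argument at a basis vector
  have hexp : ∀ (u : Fin n → ℝ) (j : Fin n), B u (Pi.single j 1) = ∑ i, u i * W i j := by
    intro u j
    have hu : u = ∑ i, u i • (Pi.single i 1 : Fin n → ℝ) := by
      simp only [← Pi.single_smul, smul_eq_mul, mul_one, Finset.univ_sum_single]
    conv_lhs => rw [hu]
    rw [map_sum, LinearMap.sum_apply]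
    exact Finset.sum_congr rfl fun i _ => by
      rw [_root_.map_smul, LinearMap.smul_apply, smul_eq_mul]; rfl
  have hWsymm : W.IsSymm := by
    ext i j
    exact hsymm (Pi.single j 1) (Pi.single i 1)
  have hmulvec_single : ∀ (j : Fin n), X.mulVec (Pi.single j 1) = fun i => X i j := by
    intro j
    rw [Matrix.mulVec_single]
    funext i
    simp
  -- X^T * W = W * X
  have hcomm : Xᵀ * W = W * X := by
    ext i j
    have h1 : (Xᵀ * W) i j = B (X.mulVec (Pi.single i 1)) (Pi.single j 1) := by
      rw [hexp, Matrix.mul_apply]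
      exact Finset.sum_congr rfl fun k _ => by rw [hmulvec_single, Matrix.transpose_apply]
    have h2 : (W * X) i j = B (Pi.single i 1) (X.mulVec (Pi.single j 1)) := by
      rw [hsymm, hexp, Matrix.mul_apply]
      refine Finset.sum_congr rfl fun k _ => ?_
      rw [hmulvec_single, Matrix.IsSymm.apply hWsymm]
      ring
    rw [h1, h2]
    have := hadj (Pi.single i 1) (Pi.single j 1)
    simpa [Matrix.mulVecLin_apply] using this
  -- W invertible
  have hdet : IsUnit W.det := by
    rw [isUnit_iff_ne_zero]
    intro h0
    obtain ⟨v, hv, hWv⟩ := (Matrix.exists_mulVec_eq_zero_iff).mpr h0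
    apply hv
    refine hnd v fun u => ?_
    rw [hsymm]
    have hWv' : ∀ i, ∑ j, W i j * v j = 0 := by
      intro i
      have := congrFun hWv i
      simpa [Matrix.mulVec, dotProduct] using this
    have hvv : v = ∑ j, v j • (Pi.single j 1 : Fin n → ℝ) := by
      simp only [← Pi.single_smul, smul_eq_mul, mul_one, Finset.univ_sum_single]
    conv_lhs => rw [hvv]
    rw [map_sum]
    have hterm : ∀ j : Fin n, (B u) (v j • (Pi.single j 1 : Fin n → ℝ)) = v j * ∑ i, u i * W i j := by
      intro j
      rw [_root_.map_smul, smul_eq_mul, hexp]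
    rw [Finset.sum_congr rfl (fun j _ => hterm j)]
    have swap : ∑ j, v j * ∑ i, u i * W i j = ∑ i, u i * ∑ j, W i j * v j := by
      simp_rw [Finset.mul_sum]
      rw [Finset.sum_comm]
      exact Finset.sum_congr rfl fun i _ => Finset.sum_congr rfl fun j _ => by ring
    rw [swap]
    simp [hWv']
  refine ⟨W⁻¹, W * X, ?_, ?_, ?_, ?_⟩
  · unfold Matrix.IsSymm
    rw [Matrix.transpose_nonsing_inv, hWsymm.eq]
  · unfold Matrix.IsSymm
    rw [Matrix.transpose_mul, hWsymm.eq, ← hcomm]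
  · rw [Matrix.isUnit_iff_isUnit_det]
    exact Matrix.isUnit_nonsing_inv_det _ hdet
  · rw [← Matrix.mul_assoc, Matrix.nonsing_inv_mul _ hdet, Matrix.one_mul]
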